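/- Let k be a commutative ring and A an associative unital k-algebra which is finitely generated and projective as a k-module. Then A is a Frobenius algebra (i.e. there exists a k-linear isomorphism φ: A → Hom_k(A,k) satisfying φ(ab)(x) = φ(b)(xa) for all a,b,x ∈ A) if and only if there exist R ∈ End_k(A)⊗End_k(A) and a k-linear map ε: End_k(A) → k such that (i) R is a solution of the FS-equation R¹²R²³ = R²³R¹³ = R¹³R¹² in End_k(A)⊗End_k(A)⊗End_k(A), (ii) the normalizing Frobenius condition (ε⊗I)(R) = (I⊗ε)(R) = I_A holds (i.e. Σ ε(R¹)R² = Σ R¹ε(R²) = I_A in End_k(A)), and (iii) there is a k-algebra isomorphism A ≅ A(R), where A(R) := {f ∈ End_k(A) | (f⊗1)·R = R·(1⊗f) in End_k(A)⊗End_k(A)}. -/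

import Mathlib

open TensorProduct

variable {k B : Type*} [CommRing k] [Ring B] [Algebra k B]

/-- The map `B ⊗ B → B ⊗ B ⊗ B`, `x ⊗ y ↦ x ⊗ y ⊗ 1`. -/
noncomputable def leg12 : B ⊗[k] B →ₐ[k] B ⊗[k] (B ⊗[k] B) :=
  Algebra.TensorProduct.map (AlgHom.id k B) Algebra.TensorProduct.includeLeft

/-- The map `B ⊗ B → B ⊗ B ⊗ B`, `x ⊗ y ↦ x ⊗ 1 ⊗ y`. -/
noncomputable def leg13 : B ⊗[k] B →ₐ[k] B ⊗[k] (B ⊗[k] B) :=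
  Algebra.TensorProduct.map (AlgHom.id k B) Algebra.TensorProduct.includeRight

/-- The map `B ⊗ B → B ⊗ B ⊗ B`, `x ⊗ y ↦ 1 ⊗ x ⊗ y`. -/
noncomputable def leg23 : B ⊗[k] B →ₐ[k] B ⊗[k] (B ⊗[k] B) :=
  Algebra.TensorProduct.includeRight

/-!
A Frobenius structure on `A` amounts to a Frobenius pair `(ε, e)`: a functional `ε` and
`e = ∑ e¹ ⊗ e² ∈ A ⊗ A` with `∑ ε (b e¹) e² = b = ∑ e¹ ε (e² b)` for all `b`. For finitely
generated projective `A` such an `e` exists because `A* ⊗ A ≅ End(A)`, and the same isomorphism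
shows that `e` is a Casimir element, `(a ⊗ 1) e = e (1 ⊗ a)`. A Casimir element solves the
FS-equation, hence so does its image `R` under the left regular representation `A → End(A)`;
with `ε f := ε (f 1)` the pair identities give the normalization and identify `A(R)` with the
image of `A`.

Conversely, contracting the legs of the FS-equation with `ε` shows that
`f ↦ ∑ ε (f R¹) R²` and `f ↦ ∑ R¹ ε (R² f)` take values in `A(R)` and that their tensor product
fixes `R`. So `R` is the image of some `e ∈ A(R) ⊗ A(R)` (the map
`A(R) ⊗ A(R) → End(A) ⊗ End(A)` need not be injective), and the normalization makes
`(ε|A(R), e)` a Frobenius pair of `A(R) ≅ A`.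
-/

section Slices

variable {M N : Type*} [AddCommGroup M] [Module k M] [AddCommGroup N] [Module k N]

noncomputable def sliceLeft (ε : M →ₗ[k] k) : M ⊗[k] N →ₗ[k] N :=
  (TensorProduct.lid k N).toLinearMap ∘ₗ TensorProduct.map ε LinearMap.id

noncomputable def sliceRight (ε : M →ₗ[k] k) : N ⊗[k] M →ₗ[k] N :=
  (TensorProduct.rid k N).toLinearMap ∘ₗ TensorProduct.map LinearMap.id ε

@[simp] lemma sliceLeft_tmul (ε : M →ₗ[k] k) (m : M) (n : N) :
    sliceLeft ε (m ⊗ₜ[k] n) = ε m • n := by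
  simp [sliceLeft]

@[simp] lemma sliceRight_tmul (ε : M →ₗ[k] k) (n : N) (m : M) :
    sliceRight ε (n ⊗ₜ[k] m) = ε m • n := by
  simp [sliceRight]

lemma apply_sliceRight_eq_apply_sliceLeft (ε : M →ₗ[k] k) (l : N →ₗ[k] k) (t : M ⊗[k] N) :
    ε (sliceRight l t) = l (sliceLeft ε t) := by
  induction t using TensorProduct.induction_on with
  | zero => simp
  | tmul m n => simp [mul_comm]
  | add t₁ t₂ h₁ h₂ => simp [h₁, h₂]

end Slices

section Legs

variable {C : Type*} [Ring C] [Algebra k C]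

@[simp] lemma leg12_tmul (x y : B) : (leg12 (x ⊗ₜ[k] y) : B ⊗[k] (B ⊗[k] B)) = x ⊗ₜ (y ⊗ₜ 1) := by
  simp [leg12]

@[simp] lemma leg13_tmul (x y : B) : (leg13 (x ⊗ₜ[k] y) : B ⊗[k] (B ⊗[k] B)) = x ⊗ₜ (1 ⊗ₜ y) := by
  simp [leg13]

@[simp] lemma leg23_tmul (x y : B) : (leg23 (x ⊗ₜ[k] y) : B ⊗[k] (B ⊗[k] B)) = 1 ⊗ₜ (x ⊗ₜ y) := by
  simp [leg23]

lemma leg12_tmul_mul_leg23 (a b : B) (t : B ⊗[k] B) :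
    leg12 (a ⊗ₜ[k] b) * leg23 t = a ⊗ₜ ((b ⊗ₜ 1) * t) := by
  induction t using TensorProduct.induction_on with
  | zero => simp
  | tmul c d => simp
  | add t₁ t₂ h₁ h₂ => rw [map_add, mul_add, h₁, h₂, mul_add, tmul_add]

lemma leg23_mul_leg13_tmul (t : B ⊗[k] B) (a b : B) :
    leg23 t * leg13 (a ⊗ₜ[k] b) = a ⊗ₜ (t * (1 ⊗ₜ b)) := by
  induction t using TensorProduct.induction_on with
  | zero => simp
  | tmul c d => simp
  | add t₁ t₂ h₁ h₂ => rw [map_add, add_mul, h₁, h₂, add_mul, tmul_add]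

lemma leg13_tmul_mul_leg12 (a b : B) (t : B ⊗[k] B) :
    leg13 (a ⊗ₜ[k] b) * leg12 t = TensorProduct.assoc k B B B (((a ⊗ₜ 1) * t) ⊗ₜ b) := by
  induction t using TensorProduct.induction_on with
  | zero => simp
  | tmul c d => simp
  | add t₁ t₂ h₁ h₂ => rw [map_add, mul_add, h₁, h₂, mul_add, add_tmul, map_add]

lemma leg12_mul_leg23_tmul (t : B ⊗[k] B) (a b : B) :
    leg12 t * leg23 (a ⊗ₜ[k] b) = TensorProduct.assoc k B B B ((t * (1 ⊗ₜ a)) ⊗ₜ b) := by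
  induction t using TensorProduct.induction_on with
  | zero => simp
  | tmul c d => simp
  | add t₁ t₂ h₁ h₂ => rw [map_add, add_mul, h₁, h₂, add_mul, add_tmul, map_add]

lemma leg12_map (ψ : B →ₐ[k] C) (t : B ⊗[k] B) :
    leg12 (Algebra.TensorProduct.map ψ ψ t) =
      Algebra.TensorProduct.map ψ (Algebra.TensorProduct.map ψ ψ) (leg12 t) := by
  induction t using TensorProduct.induction_on with
  | zero => simp
  | tmul c d => simp
  | add t₁ t₂ h₁ h₂ => simp [h₁, h₂]

lemma leg13_map (ψ : B →ₐ[k] C) (t : B ⊗[k] B) :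
    leg13 (Algebra.TensorProduct.map ψ ψ t) =
      Algebra.TensorProduct.map ψ (Algebra.TensorProduct.map ψ ψ) (leg13 t) := by
  induction t using TensorProduct.induction_on with
  | zero => simp
  | tmul c d => simp
  | add t₁ t₂ h₁ h₂ => simp [h₁, h₂]

lemma leg23_map (ψ : B →ₐ[k] C) (t : B ⊗[k] B) :
    leg23 (Algebra.TensorProduct.map ψ ψ t) =
      Algebra.TensorProduct.map ψ (Algebra.TensorProduct.map ψ ψ) (leg23 t) := by
  induction t using TensorProduct.induction_on with
  | zero => simp
  | tmul c d => simp
  | add t₁ t₂ h₁ h₂ => simp [h₁, h₂]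

end Legs

section Multiplication

variable {C : Type*} [Ring C] [Algebra k C]

noncomputable def sliceLeftMul (ε : B →ₗ[k] k) : B ⊗[k] B →ₗ[k] B →ₗ[k] B :=
  ((LinearMap.mul k (B ⊗[k] B)).flip.compr₂ (sliceLeft ε)).compl₂ ((TensorProduct.mk k B B).flip 1)

noncomputable def sliceRightMul (ε : B →ₗ[k] k) : B ⊗[k] B →ₗ[k] B →ₗ[k] B :=
  ((LinearMap.mul k (B ⊗[k] B)).compr₂ (sliceRight ε)).compl₂ (TensorProduct.mk k B B 1)

lemma sliceLeftMul_apply (ε : B →ₗ[k] k) (t : B ⊗[k] B) (b : B) :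
    sliceLeftMul ε t b = sliceLeft ε ((b ⊗ₜ 1) * t) := rfl

lemma sliceRightMul_apply (ε : B →ₗ[k] k) (t : B ⊗[k] B) (b : B) :
    sliceRightMul ε t b = sliceRight ε (t * (1 ⊗ₜ b)) := rfl

lemma sliceLeft_mul_one_tmul (ε : B →ₗ[k] k) (t : B ⊗[k] B) (b : B) :
    sliceLeft ε (t * (1 ⊗ₜ b)) = sliceLeft ε t * b := by
  induction t using TensorProduct.induction_on with
  | zero => simp
  | tmul u v => simp
  | add t₁ t₂ h₁ h₂ => simp only [add_mul, map_add, h₁, h₂]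

lemma sliceRight_tmul_one_mul (ε : B →ₗ[k] k) (b : B) (t : B ⊗[k] B) :
    sliceRight ε ((b ⊗ₜ 1) * t) = b * sliceRight ε t := by
  induction t using TensorProduct.induction_on with
  | zero => simp
  | tmul u v => simp
  | add t₁ t₂ h₁ h₂ => simp only [mul_add, map_add, h₁, h₂]

lemma sliceLeft_tmul_one_mul (ε : B →ₗ[k] k) (b : B) (t : B ⊗[k] B) :
    sliceLeft ε ((b ⊗ₜ 1) * t) = sliceLeft (ε ∘ₗ LinearMap.mulLeft k b) t := by
  induction t using TensorProduct.induction_on with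
  | zero => simp
  | tmul u v => simp
  | add t₁ t₂ h₁ h₂ => simp only [mul_add, map_add, h₁, h₂]

lemma sliceRight_mul_one_tmul (ε : B →ₗ[k] k) (t : B ⊗[k] B) (b : B) :
    sliceRight ε (t * (1 ⊗ₜ b)) = sliceRight (ε ∘ₗ LinearMap.mulRight k b) t := by
  induction t using TensorProduct.induction_on with
  | zero => simp
  | tmul u v => simp
  | add t₁ t₂ h₁ h₂ => simp only [add_mul, map_add, h₁, h₂]

lemma sliceLeft_map (ε : C →ₗ[k] k) (ψ : B →ₐ[k] C) (t : B ⊗[k] B) :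
    sliceLeft ε (Algebra.TensorProduct.map ψ ψ t) = ψ (sliceLeft (ε ∘ₗ ψ.toLinearMap) t) := by
  induction t using TensorProduct.induction_on with
  | zero => simp
  | tmul u v => simp
  | add t₁ t₂ h₁ h₂ => simp only [map_add, h₁, h₂]

lemma sliceRight_map (ε : C →ₗ[k] k) (ψ : B →ₐ[k] C) (t : B ⊗[k] B) :
    sliceRight ε (Algebra.TensorProduct.map ψ ψ t) = ψ (sliceRight (ε ∘ₗ ψ.toLinearMap) t) := by
  induction t using TensorProduct.induction_on with
  | zero => simp
  | tmul u v => simp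
  | add t₁ t₂ h₁ h₂ => simp only [map_add, h₁, h₂]

lemma sliceLeftMul_map (ε : C →ₗ[k] k) (ψ : B →ₐ[k] C)
    (t : B ⊗[k] B) (b : B) :
    sliceLeftMul ε (Algebra.TensorProduct.map ψ ψ t) (ψ b) =
      ψ (sliceLeftMul (ε ∘ₗ ψ.toLinearMap) t b) := by
  rw [sliceLeftMul_apply, sliceLeftMul_apply, ← sliceLeft_map,
    map_mul (Algebra.TensorProduct.map ψ ψ), Algebra.TensorProduct.map_tmul, map_one]

lemma sliceRightMul_map (ε : C →ₗ[k] k) (ψ : B →ₐ[k] C)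
    (t : B ⊗[k] B) (b : B) :
    sliceRightMul ε (Algebra.TensorProduct.map ψ ψ t) (ψ b) =
      ψ (sliceRightMul (ε ∘ₗ ψ.toLinearMap) t b) := by
  rw [sliceRightMul_apply, sliceRightMul_apply, ← sliceRight_map,
    map_mul (Algebra.TensorProduct.map ψ ψ), Algebra.TensorProduct.map_tmul, map_one]

end Multiplication

section FSEquation

variable {C : Type*} [Ring C] [Algebra k C]

def AR (R : B ⊗[k] B) : Subalgebra k B where
  carrier := {f | (f ⊗ₜ[k] 1) * R = R * (1 ⊗ₜ[k] f)}
  mul_mem' {f g} (hf : (f ⊗ₜ[k] 1) * R = R * (1 ⊗ₜ[k] f))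
      (hg : (g ⊗ₜ[k] 1) * R = R * (1 ⊗ₜ[k] g)) := by
    change ((f * g) ⊗ₜ[k] 1) * R = R * (1 ⊗ₜ[k] (f * g))
    calc ((f * g) ⊗ₜ[k] 1) * R = (f ⊗ₜ[k] 1) * ((g ⊗ₜ[k] 1) * R) := by
          rw [← mul_assoc, Algebra.TensorProduct.tmul_mul_tmul, one_mul]
      _ = R * (1 ⊗ₜ[k] (f * g)) := by
          rw [hg, ← mul_assoc, hf, mul_assoc, Algebra.TensorProduct.tmul_mul_tmul, one_mul]
  add_mem' {f g} (hf : (f ⊗ₜ[k] 1) * R = R * (1 ⊗ₜ[k] f))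
      (hg : (g ⊗ₜ[k] 1) * R = R * (1 ⊗ₜ[k] g)) := by
    change ((f + g) ⊗ₜ[k] 1) * R = R * (1 ⊗ₜ[k] (f + g))
    rw [add_tmul, tmul_add, add_mul, mul_add, hf, hg]
  algebraMap_mem' c := by
    change ((algebraMap k B c) ⊗ₜ[k] 1) * R = R * (1 ⊗ₜ[k] (algebraMap k B c))
    rw [Algebra.algebraMap_eq_smul_one, ← smul_tmul', tmul_smul, smul_mul_assoc,
      mul_smul_comm, ← Algebra.TensorProduct.one_def, mul_one, one_mul]

lemma mem_AR {R : B ⊗[k] B} {f : B} : f ∈ AR R ↔ (f ⊗ₜ[k] 1) * R = R * (1 ⊗ₜ[k] f) :=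
  Iff.rfl

def IsFSSolution (R : B ⊗[k] B) : Prop :=
  leg12 R * leg23 R = leg23 R * leg13 R ∧ leg23 R * leg13 R = leg13 R * leg12 R

lemma isFSSolution_of_AR_eq_top {e : B ⊗[k] B} (he : AR e = ⊤) : IsFSSolution e := by
  have hmem (b : B) : (b ⊗ₜ[k] 1) * e = e * (1 ⊗ₜ[k] b) := mem_AR.1 (he ▸ Algebra.mem_top)
  have h₁ (x : B ⊗[k] B) : leg12 x * leg23 e = leg23 e * leg13 x := by
    induction x using TensorProduct.induction_on with
    | zero => simp
    | tmul a b => rw [leg12_tmul_mul_leg23, leg23_mul_leg13_tmul, hmem]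
    | add x₁ x₂ h₁ h₂ => rw [map_add, map_add, add_mul, mul_add, h₁, h₂]
  have h₂ (y : B ⊗[k] B) : leg13 y * leg12 e = leg12 e * leg23 y := by
    induction y using TensorProduct.induction_on with
    | zero => simp
    | tmul a b => rw [leg13_tmul_mul_leg12, leg12_mul_leg23_tmul, hmem]
    | add y₁ y₂ h₁ h₂ => rw [map_add, map_add, add_mul, mul_add, h₁, h₂]
  exact ⟨h₁ e, by rw [h₂, h₁]⟩

lemma IsFSSolution.map {R : B ⊗[k] B} (hR : IsFSSolution R)
    (ψ : B →ₐ[k] C) : IsFSSolution (Algebra.TensorProduct.map ψ ψ R) := by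
  simp only [IsFSSolution, leg12_map, leg13_map, leg23_map, ← map_mul, hR.1, hR.2, and_self]

lemma map_mem_AR_map {R : B ⊗[k] B} (ψ : B →ₐ[k] C)
    {f : B} (hf : f ∈ AR R) : ψ f ∈ AR (Algebra.TensorProduct.map ψ ψ R) := by
  have := congrArg (Algebra.TensorProduct.map ψ ψ) (mem_AR.1 hf)
  exact mem_AR.2 (by simpa only [map_mul, Algebra.TensorProduct.map_tmul, map_one] using this)

end FSEquation

section Frobenius

variable {A : Type*} [Ring A] [Algebra k A]

variable (k A) in
def IsFrobenius : Prop :=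
  ∃ φ : A ≃ₗ[k] (A →ₗ[k] k), ∀ a b x : A, φ (a * b) x = φ b (x * a)

noncomputable def formDual (ε : A →ₗ[k] k) : A →ₗ[k] (A →ₗ[k] k) :=
  (LinearMap.mul k A).flip.compr₂ ε

@[simp] lemma formDual_apply (ε : A →ₗ[k] k) (a x : A) : formDual ε a x = ε (x * a) := rfl

lemma isFrobenius_iff : IsFrobenius k A ↔ ∃ ε : A →ₗ[k] k, Function.Bijective (formDual ε) := by
  constructor
  · rintro ⟨φ, hφ⟩
    have hφ₁ : formDual (φ 1) = φ := by
      ext a x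
      simpa using (hφ a 1 x).symm
    exact ⟨φ 1, hφ₁ ▸ φ.bijective⟩
  · rintro ⟨ε, hε⟩
    exact ⟨LinearEquiv.ofBijective _ hε, fun a b x => by simp [mul_assoc]⟩

lemma IsFrobenius.of_algEquiv {A' : Type*} [Ring A'] [Algebra k A'] (h : IsFrobenius k A')
    (α : A ≃ₐ[k] A') : IsFrobenius k A := by
  obtain ⟨φ, hφ⟩ := h
  refine ⟨α.toLinearEquiv ≪≫ₗ φ ≪≫ₗ α.toLinearEquiv.dualMap, fun a b x => ?_⟩
  simp [hφ]

/-- The identities `∑ ε (b e¹) e² = b = ∑ e¹ ε (e² b)`: the two legs of `e` form dual bases for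
the pairing `(x, y) ↦ ε (x y)`. -/
structure IsFrobeniusPair (ε : A →ₗ[k] k) (e : A ⊗[k] A) : Prop where
  sliceLeftMul_eq_one : sliceLeftMul ε e = 1
  sliceRightMul_eq_one : sliceRightMul ε e = 1

lemma sliceRight_formDual (ε : A →ₗ[k] k) (a : A) (t : A ⊗[k] A) :
    sliceRight (formDual ε a) t = sliceRightMul ε t a := by
  rw [sliceRightMul_apply, sliceRight_mul_one_tmul]
  rfl

lemma IsFrobeniusPair.isFrobenius {ε : A →ₗ[k] k} {e : A ⊗[k] A} (h : IsFrobeniusPair ε e) :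
    IsFrobenius k A := by
  refine isFrobenius_iff.2
    ⟨ε, Function.bijective_iff_has_inverse.2 ⟨fun l => sliceRight l e, ?_, ?_⟩⟩
  · intro a
    simp only [sliceRight_formDual, h.sliceRightMul_eq_one, Module.End.one_apply]
  · intro l
    ext x
    rw [formDual_apply, ← sliceRight_tmul_one_mul, apply_sliceRight_eq_apply_sliceLeft,
      ← sliceLeftMul_apply,
      h.sliceLeftMul_eq_one, Module.End.one_apply]

lemma sliceLeftMul_eq_dualTensorHom_comp (ε : A →ₗ[k] k) :
    sliceLeftMul ε = dualTensorHom k A A ∘ₗ (formDual ε).rTensor A := by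
  apply TensorProduct.ext'
  intro u v
  ext z
  simp [sliceLeftMul_apply]

lemma bijective_sliceLeftMul [Module.Finite k A] [Module.Projective k A] {ε : A →ₗ[k] k}
    (hε : Function.Bijective (formDual ε)) : Function.Bijective (sliceLeftMul ε) := by
  rw [sliceLeftMul_eq_dualTensorHom_comp, LinearMap.coe_comp]
  exact dualTensorHom_bijective.comp
    (LinearEquiv.rTensor A (LinearEquiv.ofBijective _ hε)).bijective

lemma sliceRightMul_eq_one_of_sliceLeftMul_eq_one {ε : A →ₗ[k] k}
    (hε : Function.Injective (formDual ε))
    {e : A ⊗[k] A} (he : sliceLeftMul ε e = 1) : sliceRightMul ε e = 1 := by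
  ext a
  apply hε
  ext y
  calc ε (y * sliceRightMul ε e a) = ε (sliceLeft ε ((y ⊗ₜ 1) * (e * (1 ⊗ₜ a)))) := by
        rw [sliceRightMul_apply, ← sliceRight_tmul_one_mul, apply_sliceRight_eq_apply_sliceLeft]
    _ = ε (y * a) := by
        rw [← mul_assoc, sliceLeft_mul_one_tmul, ← sliceLeftMul_apply, he, Module.End.one_apply]

lemma AR_eq_top_of_sliceLeftMul_eq_one {ε : A →ₗ[k] k} (hinj : Function.Injective (sliceLeftMul ε))
    {e : A ⊗[k] A} (he : sliceLeftMul ε e = 1) : AR e = ⊤ := by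
  refine eq_top_iff.2 fun a _ => mem_AR.2 (hinj ?_)
  ext z
  calc sliceLeftMul ε ((a ⊗ₜ[k] (1 : A)) * e) z = sliceLeftMul ε e (z * a) := by
        rw [sliceLeftMul_apply, sliceLeftMul_apply, ← mul_assoc,
          Algebra.TensorProduct.tmul_mul_tmul, one_mul]
    _ = sliceLeftMul ε (e * (1 ⊗ₜ a)) z := by
        rw [he, sliceLeftMul_apply, ← mul_assoc, sliceLeft_mul_one_tmul, ← sliceLeftMul_apply, he]
        rfl

lemma IsFrobenius.exists_isFrobeniusPair [Module.Finite k A] [Module.Projective k A]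
    (h : IsFrobenius k A) : ∃ (ε : A →ₗ[k] k) (e : A ⊗[k] A), IsFrobeniusPair ε e ∧ AR e = ⊤ := by
  obtain ⟨ε, hε⟩ := isFrobenius_iff.1 h
  have hbij := bijective_sliceLeftMul hε
  obtain ⟨e, he⟩ := hbij.2 1
  exact ⟨ε, e, ⟨he, sliceRightMul_eq_one_of_sliceLeftMul_eq_one hε.1 he⟩,
    AR_eq_top_of_sliceLeftMul_eq_one hbij.1 he⟩

end Frobenius

section LegSlices

variable (ε : B →ₗ[k] k)

lemma sliceLeft_comp_mulLeft_leg12_mul_leg23 (f : B) (x y : B ⊗[k] B) :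
    sliceLeft (ε ∘ₗ LinearMap.mulLeft k f) (leg12 x * leg23 y) = (sliceLeftMul ε x f ⊗ₜ 1) * y := by
  induction x using TensorProduct.induction_on with
  | zero => simp
  | tmul a b =>
    rw [leg12_tmul_mul_leg23, sliceLeft_tmul, sliceLeftMul_apply,
      Algebra.TensorProduct.tmul_mul_tmul, one_mul, sliceLeft_tmul, ← smul_tmul', smul_mul_assoc]
    rfl
  | add x₁ x₂ h₁ h₂ =>
    rw [map_add, add_mul, map_add, h₁, h₂, map_add, LinearMap.add_apply, add_tmul, add_mul]

lemma sliceLeft_comp_mulLeft_leg23_mul_leg13 (f : B) (x y : B ⊗[k] B) :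
    sliceLeft (ε ∘ₗ LinearMap.mulLeft k f) (leg23 x * leg13 y) = x * (1 ⊗ₜ sliceLeftMul ε y f) := by
  induction y using TensorProduct.induction_on with
  | zero => simp
  | tmul a b =>
    rw [leg23_mul_leg13_tmul, sliceLeft_tmul, sliceLeftMul_apply,
      Algebra.TensorProduct.tmul_mul_tmul, one_mul, sliceLeft_tmul, tmul_smul, mul_smul_comm]
    rfl
  | add y₁ y₂ h₁ h₂ =>
    rw [map_add, mul_add, map_add, h₁, h₂, map_add, LinearMap.add_apply, tmul_add, mul_add]

lemma lTensor_sliceRight_comp_mulRight_leg12_mul_leg23 (f : B) (x y : B ⊗[k] B) :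
    (sliceRight (ε ∘ₗ LinearMap.mulRight k f)).lTensor B (leg12 x * leg23 y) =
      x * (1 ⊗ₜ sliceRightMul ε y f) := by
  induction x using TensorProduct.induction_on with
  | zero => simp
  | tmul a b =>
    rw [leg12_tmul_mul_leg23, LinearMap.lTensor_tmul, sliceRight_tmul_one_mul, sliceRightMul_apply,
      sliceRight_mul_one_tmul, Algebra.TensorProduct.tmul_mul_tmul, mul_one]
  | add x₁ x₂ h₁ h₂ => rw [map_add, add_mul, map_add, h₁, h₂, add_mul]

lemma lTensor_sliceRight_comp_mulRight_leg13_mul_leg12 (f : B) (x y : B ⊗[k] B) :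
    (sliceRight (ε ∘ₗ LinearMap.mulRight k f)).lTensor B (leg13 x * leg12 y) =
      (sliceRightMul ε x f ⊗ₜ 1) * y := by
  induction x using TensorProduct.induction_on with
  | zero => simp
  | tmul a b =>
    induction y using TensorProduct.induction_on with
    | zero => simp
    | tmul c d => simp [sliceRightMul_apply, smul_tmul', tmul_smul]
    | add y₁ y₂ h₁ h₂ => rw [map_add, mul_add, map_add, h₁, h₂, mul_add]
  | add x₁ x₂ h₁ h₂ =>
    rw [map_add, add_mul, map_add, h₁, h₂, map_add, LinearMap.add_apply, add_tmul, add_mul]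

lemma lTensor_sliceLeft_leg23_mul_leg13 (x y : B ⊗[k] B) :
    (sliceLeft ε).lTensor B (leg23 x * leg13 y) = (1 ⊗ₜ sliceLeft ε x) * y := by
  induction y using TensorProduct.induction_on with
  | zero => simp
  | tmul a b =>
    rw [leg23_mul_leg13_tmul, LinearMap.lTensor_tmul, sliceLeft_mul_one_tmul,
      Algebra.TensorProduct.tmul_mul_tmul, one_mul]
  | add y₁ y₂ h₁ h₂ => rw [map_add, mul_add, map_add, h₁, h₂, mul_add]

lemma lTensor_sliceLeft_leg12_mul_leg23 (x y : B ⊗[k] B) :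
    (sliceLeft ε).lTensor B (leg12 x * leg23 y) = (sliceLeftMul ε y).lTensor B x := by
  induction x using TensorProduct.induction_on with
  | zero => simp
  | tmul a b => rw [leg12_tmul_mul_leg23, LinearMap.lTensor_tmul, LinearMap.lTensor_tmul,
      sliceLeftMul_apply]
  | add x₁ x₂ h₁ h₂ => rw [map_add, add_mul, map_add, h₁, h₂, map_add]

lemma lTensor_sliceLeft_leg12_mul_leg23_eq_rTensor (x y : B ⊗[k] B) :
    (sliceLeft ε).lTensor B (leg12 x * leg23 y) = (sliceRightMul ε x).rTensor B y := by
  induction y using TensorProduct.induction_on with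
  | zero => simp
  | tmul c d =>
    rw [leg12_mul_leg23_tmul, LinearMap.rTensor_tmul, sliceRightMul_apply]
    induction x using TensorProduct.induction_on with
    | zero => simp
    | tmul a b => simp [smul_tmul']
    | add x₁ x₂ h₁ h₂ => simp only [add_mul, add_tmul, map_add, h₁, h₂]
  | add y₁ y₂ h₁ h₂ => rw [map_add, mul_add, map_add, h₁, h₂, map_add]

end LegSlices

section SolutionAlgebra

variable {ε : B →ₗ[k] k} {R : B ⊗[k] B}

lemma sliceLeftMul_of_mem_AR (hR : sliceLeft ε R = 1) {f : B} (hf : f ∈ AR R) :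
    sliceLeftMul ε R f = f := by
  rw [sliceLeftMul_apply, mem_AR.1 hf, sliceLeft_mul_one_tmul, hR, one_mul]

lemma sliceRightMul_of_mem_AR (hR : sliceRight ε R = 1) {f : B} (hf : f ∈ AR R) :
    sliceRightMul ε R f = f := by
  rw [sliceRightMul_apply, ← mem_AR.1 hf, sliceRight_tmul_one_mul, hR, mul_one]

lemma sliceLeftMul_mem_AR (h : leg12 R * leg23 R = leg23 R * leg13 R) (f : B) :
    sliceLeftMul ε R f ∈ AR R := by
  rw [mem_AR, ← sliceLeft_comp_mulLeft_leg12_mul_leg23, h, sliceLeft_comp_mulLeft_leg23_mul_leg13]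

lemma sliceRightMul_mem_AR (h : leg13 R * leg12 R = leg12 R * leg23 R) (f : B) :
    sliceRightMul ε R f ∈ AR R := by
  rw [mem_AR, ← lTensor_sliceRight_comp_mulRight_leg13_mul_leg12, h,
    lTensor_sliceRight_comp_mulRight_leg12_mul_leg23]

lemma lTensor_sliceLeftMul_self (h : leg12 R * leg23 R = leg23 R * leg13 R)
    (hR : sliceLeft ε R = 1) :
    (sliceLeftMul ε R).lTensor B R = R := by
  rw [← lTensor_sliceLeft_leg12_mul_leg23, h, lTensor_sliceLeft_leg23_mul_leg13, hR,
    ← Algebra.TensorProduct.one_def, one_mul]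

lemma rTensor_sliceRightMul_self (h : leg12 R * leg23 R = leg23 R * leg13 R)
    (hR : sliceLeft ε R = 1) :
    (sliceRightMul ε R).rTensor B R = R := by
  rw [← lTensor_sliceLeft_leg12_mul_leg23_eq_rTensor, h, lTensor_sliceLeft_leg23_mul_leg13, hR,
    ← Algebra.TensorProduct.one_def, one_mul]

lemma exists_map_AR_val_eq (hFS : IsFSSolution R) (hR : sliceLeft ε R = 1) :
    ∃ e : AR R ⊗[k] AR R, Algebra.TensorProduct.map (AR R).val (AR R).val e = R := by
  let P : B →ₗ[k] AR R :=
    (sliceRightMul ε R).codRestrict (AR R).toSubmodule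
      (sliceRightMul_mem_AR (hFS.1.trans hFS.2).symm)
  let Q : B →ₗ[k] AR R :=
    (sliceLeftMul ε R).codRestrict (AR R).toSubmodule (sliceLeftMul_mem_AR hFS.1)
  refine ⟨TensorProduct.map P Q R, ?_⟩
  change TensorProduct.map (AR R).val.toLinearMap (AR R).val.toLinearMap _ = R
  rw [← LinearMap.comp_apply, ← TensorProduct.map_comp]
  change TensorProduct.map (sliceRightMul ε R) (sliceLeftMul ε R) R = R
  rw [← LinearMap.rTensor_comp_lTensor, LinearMap.comp_apply, lTensor_sliceLeftMul_self hFS.1 hR,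
    rTensor_sliceRightMul_self hFS.1 hR]

lemma isFrobenius_AR (hFS : IsFSSolution R) (hleft : sliceLeft ε R = 1)
    (hright : sliceRight ε R = 1) :
    IsFrobenius k (AR R) := by
  obtain ⟨e, he⟩ := exists_map_AR_val_eq hFS hleft
  refine IsFrobeniusPair.isFrobenius (ε := ε ∘ₗ (AR R).val.toLinearMap) (e := e) ⟨?_, ?_⟩
  · ext s
    change (AR R).val _ = (AR R).val s
    rw [← sliceLeftMul_map, he]
    exact sliceLeftMul_of_mem_AR hleft s.2
  · ext s
    change (AR R).val _ = (AR R).val s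
    rw [← sliceRightMul_map, he]
    exact sliceRightMul_of_mem_AR hright s.2

end SolutionAlgebra

section EndomorphismAlgebra

variable {A : Type*} [Ring A] [Algebra k A] {ε : A →ₗ[k] k} {e : A ⊗[k] A}

lemma comp_applyₗ_one_comp_lmul (ε : A →ₗ[k] k) :
    (ε ∘ₗ LinearMap.applyₗ (1 : A)) ∘ₗ (Algebra.lmul k A).toLinearMap = ε := by
  ext a
  simp

lemma IsFrobeniusPair.sliceLeft_eq_one (h : IsFrobeniusPair ε e) : sliceLeft ε e = 1 := by
  simpa [sliceLeftMul_apply, ← Algebra.TensorProduct.one_def] using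
    LinearMap.congr_fun h.sliceLeftMul_eq_one 1

lemma IsFrobeniusPair.sliceRight_eq_one (h : IsFrobeniusPair ε e) : sliceRight ε e = 1 := by
  simpa [sliceRightMul_apply, ← Algebra.TensorProduct.one_def] using
    LinearMap.congr_fun h.sliceRightMul_eq_one 1

lemma IsFrobeniusPair.sliceLeft_map_lmul (h : IsFrobeniusPair ε e) :
    sliceLeft (ε ∘ₗ LinearMap.applyₗ 1)
      (Algebra.TensorProduct.map (Algebra.lmul k A) (Algebra.lmul k A) e) = 1 := by
  rw [sliceLeft_map, comp_applyₗ_one_comp_lmul, h.sliceLeft_eq_one, map_one]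

lemma IsFrobeniusPair.sliceRight_map_lmul (h : IsFrobeniusPair ε e) :
    sliceRight (ε ∘ₗ LinearMap.applyₗ 1)
      (Algebra.TensorProduct.map (Algebra.lmul k A) (Algebra.lmul k A) e) = 1 := by
  rw [sliceRight_map, comp_applyₗ_one_comp_lmul, h.sliceRight_eq_one, map_one]

lemma IsFrobeniusPair.AR_map_lmul (h : IsFrobeniusPair ε e) (he : AR e = ⊤) :
    AR (Algebra.TensorProduct.map (Algebra.lmul k A) (Algebra.lmul k A) e) =
      (Algebra.lmul k A).range := by
  apply le_antisymm
  · intro f hf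
    rw [← sliceLeftMul_of_mem_AR h.sliceLeft_map_lmul hf, sliceLeftMul_apply,
      sliceLeft_tmul_one_mul, sliceLeft_map]
    exact ⟨_, rfl⟩
  · rintro _ ⟨a, rfl⟩
    exact map_mem_AR_map _ (he ▸ Algebra.mem_top)

end EndomorphismAlgebra

/-- A finitely generated projective `k`-algebra `A` is Frobenius iff it is
isomorphic to `A(R)` for a solution `R ∈ End_k(A) ⊗ End_k(A)` of the
FS-equation satisfying the normalizing Frobenius condition. -/
theorem frobenius_iff_isomorphic_to_AR
    (k A : Type*) [CommRing k] [Ring A] [Algebra k A]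
    [Module.Finite k A] [Module.Projective k A] :
    (∃ φ : A ≃ₗ[k] (A →ₗ[k] k), ∀ a b x : A, φ (a * b) x = φ b (x * a)) ↔
    (∃ (R : Module.End k A ⊗[k] Module.End k A)
        (ε : Module.End k A →ₗ[k] k),
      (leg12 R * leg23 R = leg23 R * leg13 R ∧
        leg23 R * leg13 R = leg13 R * leg12 R) ∧
      ((TensorProduct.lid k (Module.End k A))
          ((TensorProduct.map ε LinearMap.id) R) = 1 ∧
        (TensorProduct.rid k (Module.End k A))
          ((TensorProduct.map LinearMap.id ε) R) = 1) ∧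
      ∃ S : Subalgebra k (Module.End k A),
        (S : Set (Module.End k A)) =
          {f : Module.End k A |
            (f ⊗ₜ[k] (1 : Module.End k A)) * R = R * ((1 : Module.End k A) ⊗ₜ[k] f)} ∧
        Nonempty (A ≃ₐ[k] S)) := by
  constructor
  · intro hA
    obtain ⟨ε, e, he, hAR⟩ := IsFrobenius.exists_isFrobeniusPair hA
    exact ⟨_, ε ∘ₗ LinearMap.applyₗ 1, (isFSSolution_of_AR_eq_top hAR).map _,
      ⟨he.sliceLeft_map_lmul, he.sliceRight_map_lmul⟩, AR _, rfl,
      ⟨(AlgEquiv.ofInjective _ Algebra.lmul_injective).trans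
        (Subalgebra.equivOfEq _ _ (he.AR_map_lmul hAR).symm)⟩⟩
  · rintro ⟨R, ε, hFS, ⟨hleft, hright⟩, S, hS, ⟨α⟩⟩
    obtain rfl : S = AR R := SetLike.coe_injective hS
    exact (isFrobenius_AR hFS hleft hright).of_algEquiv α
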